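/- arXiv:2108.05569 — 3 statements merged into one kernel-verified Lean document; each statement's English description precedes it below -/
import Mathlib

section
/- Let (X, H) be a hypothesis class with Littlestone dimension d < ∞ and let T ∈ ℕ. Then there exists a family A of at most Σ_{i=0}^{d} C(T,i) adaptive experts over X such that for every sequence x_1,...,x_T of elements of X, every sequence of labels t_1,...,t_T ∈ {0,1}, and every h ∈ H, there is an expert E ∈ A with { i ≤ T : E(x_1,...,x_i) ≠ t_i } = { i ≤ T : h(x_i) ≠ t_i }; that is, E makes exactly the same set of mistakes on the labeled sequence as h does. -/
open scoped Classical

/-- `h` realizes the branch `y` in the binary tree with node labels given by `t`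
(the node reached by the bit string `s` is labeled `t s`). -/
def Realizes {X : Type*} (t : List Bool → X) (h : X → Bool) (y : List Bool) : Prop :=
  ∀ i : Fin y.length, h (t (y.take i)) = y.get i

/-- `H` shatters some complete binary mistake tree of depth `d`. -/
def Shatters {X : Type*} (H : Set (X → Bool)) (d : ℕ) : Prop :=
  ∃ t : List Bool → X, ∀ y : List Bool, y.length = d → ∃ h ∈ H, Realizes t h y

/-- Littlestone dimension: supremum of depths of shattered mistake trees
(`⊥` for the empty class, `⊤` if unbounded). -/
noncomputable def Ldim {X : Type*} (H : Set (X → Bool)) : WithBot ℕ∞ :=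
  sSup {d : WithBot ℕ∞ | ∃ n : ℕ, Shatters H n ∧ d = ((n : ℕ∞) : WithBot ℕ∞)}

/-- The prefix `x_1, …, x_{i+1}` of the sequence `x` (0-indexed: entries `x 0, …, x i`). -/
def prefList {X : Type*} {T : ℕ} (x : Fin T → X) (i : Fin T) : List X :=
  List.ofFn fun j : Fin (i.1 + 1) =>
    x ⟨j.1, Nat.lt_of_lt_of_le j.2 (Nat.succ_le_of_lt i.2)⟩

section Aux
variable {X : Type*}

def restr (H' : Set (X → Bool)) (x : X) (b : Bool) : Set (X → Bool) := {h ∈ H' | h x = b}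

lemma restr_subset (H' : Set (X → Bool)) (x : X) (b : Bool) : restr H' x b ⊆ H' :=
  fun _ hh => hh.1

lemma shatters_mono {H₁ H₂ : Set (X → Bool)} (hsub : H₁ ⊆ H₂) {n : ℕ}
    (hs : Shatters H₁ n) : Shatters H₂ n := by
  obtain ⟨t, ht⟩ := hs
  exact ⟨t, fun y hy => by obtain ⟨h, hh, hr⟩ := ht y hy; exact ⟨h, hsub hh, hr⟩⟩

lemma shatters_zero (x : X) {H' : Set (X → Bool)} (hne : H'.Nonempty) : Shatters H' 0 := by
  obtain ⟨h, hh⟩ := hne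
  exact ⟨fun _ => x, fun y hy => ⟨h, hh, fun i => absurd i.2 (by simp [hy])⟩⟩

lemma shatters_anti {H' : Set (X → Bool)} {m n : ℕ} (hs : Shatters H' m) (hnm : n ≤ m) :
    Shatters H' n := by
  obtain ⟨t, ht⟩ := hs
  refine ⟨t, fun y hy => ?_⟩
  obtain ⟨h, hh, hr⟩ := ht (y ++ List.replicate (m - n) false) (by simp [hy]; omega)
  refine ⟨h, hh, fun i => ?_⟩
  have hi : i.1 < y.length := i.2
  have := hr ⟨i.1, by simp [hy]; omega⟩
  simpa [List.take_append_of_le_length (le_of_lt hi),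
    List.get_eq_getElem, List.getElem_append_left hi] using this

lemma shatters_step {H' : Set (X → Bool)} {x : X} {k : ℕ}
    (h0 : Shatters (restr H' x false) k) (h1 : Shatters (restr H' x true) k) :
    Shatters H' (k + 1) := by
  obtain ⟨t0, ht0⟩ := h0
  obtain ⟨t1, ht1⟩ := h1
  refine ⟨fun s => match s with
    | [] => x
    | b :: s' => (bif b then t1 else t0) s', fun y hy => ?_⟩
  match y, hy with
  | b :: y', hy =>
    have hy' : y'.length = k := by simpa using hy
    have hbr : ∀ y'', y''.length = k → ∃ h ∈ restr H' x b, Realizes (bif b then t1 else t0) h y'' := by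
      cases b
      · simpa using ht0
      · simpa using ht1
    obtain ⟨h, hh, hr⟩ := hbr y' hy'
    refine ⟨h, hh.1, fun i => ?_⟩
    match i with
    | ⟨0, _⟩ => simpa using hh.2
    | ⟨j + 1, hj⟩ =>
      have hj' : j < y'.length := by simpa using hj
      have := hr ⟨j, hj'⟩
      simpa using this

noncomputable def dimN (H' : Set (X → Bool)) : ℕ := sSup {n | Shatters H' n}

lemma le_dimN {H' : Set (X → Bool)} {D n : ℕ} (hb : ∀ n, Shatters H' n → n ≤ D)
    (hs : Shatters H' n) : n ≤ dimN H' :=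
  le_csSup ⟨D, fun m hm => hb m hm⟩ hs

lemma dimN_le {H' : Set (X → Bool)} {D : ℕ} (hb : ∀ n, Shatters H' n → n ≤ D) :
    dimN H' ≤ D :=
  csSup_le' (fun m hm => hb m hm)

lemma shatters_dimN {H' : Set (X → Bool)} {D : ℕ} (hb : ∀ n, Shatters H' n → n ≤ D)
    (h0 : Shatters H' 0) : Shatters H' (dimN H') :=
  Nat.sSup_mem ⟨0, show (0:ℕ) ∈ {n | Shatters H' n} from h0⟩ ⟨D, fun m hm => hb m hm⟩

noncomputable def soaPred (H' : Set (X → Bool)) (x : X) : Bool :=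
  if Shatters (restr H' x false) (dimN H') then false else true

lemma dimN_drop {H' : Set (X → Bool)} {D : ℕ} (hb : ∀ n, Shatters H' n → n ≤ D)
    {h : X → Bool} {x : X} (hh : h ∈ H') (hx : soaPred H' x ≠ h x) :
    dimN (restr H' x (h x)) < dimN H' := by
  have hbr : ∀ b n, Shatters (restr H' x b) n → n ≤ D :=
    fun b n hn => hb n (shatters_mono (restr_subset H' x b) hn)
  have hns : ¬ Shatters (restr H' x (h x)) (dimN H') := by
    by_cases hf : Shatters (restr H' x false) (dimN H')
    · have hb' : soaPred H' x = false := by simp [soaPred, hf]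
      have hx' : h x = true := by
        cases hhx : h x
        · rw [hb', hhx] at hx; simp at hx
        · rfl
      rw [hx']
      intro hT
      have hstep := shatters_step hf hT
      have := le_dimN hb hstep
      omega
    · have hb' : soaPred H' x = true := by simp [soaPred, hf]
      have hx' : h x = false := by
        cases hhx : h x
        · rfl
        · rw [hb', hhx] at hx; simp at hx
      rw [hx']; exact hf
  have h0 : Shatters (restr H' x (h x)) 0 := shatters_zero x ⟨h, hh, rfl⟩
  have hmem : Shatters (restr H' x (h x)) (dimN (restr H' x (h x))) :=
    shatters_dimN (hbr _) h0
  by_contra hle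
  push_neg at hle
  exact hns (shatters_anti hmem hle)

noncomputable def runOut : Set (X → Bool) → (ℕ → Bool) → List X → Bool
  | _, _, [] => true
  | H', S, [a] => xor (soaPred H' a) (S 0)
  | H', S, a :: b :: l =>
      runOut (restr H' a (xor (soaPred H' a) (S 0))) (fun n => S (n + 1)) (b :: l)

noncomputable def trueRun (h : X → Bool) : Set (X → Bool) → List X → Set (X → Bool)
  | H', [] => H'
  | H', a :: l => trueRun h (restr H' a (h a)) l

noncomputable def mistSet (h : X → Bool) : Set (X → Bool) → List X → Finset ℕ
  | _, [] => ∅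
  | H', a :: l =>
      (if soaPred H' a ≠ h a then {0} else ∅) ∪ (mistSet h (restr H' a (h a)) l).image (· + 1)

lemma mistSet_subset (h : X → Bool) :
    ∀ (l : List X) (H' : Set (X → Bool)), mistSet h H' l ⊆ Finset.range l.length
  | [], H' => by simp [mistSet]
  | a :: l, H' => by
    intro j hj
    simp only [mistSet, Finset.mem_union, Finset.mem_image] at hj
    rcases hj with hj | ⟨k, hk, rfl⟩
    · split at hj <;> simp_all
    · have := mistSet_subset h l (restr H' a (h a)) hk
      simp at this ⊢
      omega

lemma card_mistSet (h : X → Bool) {D : ℕ} :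
    ∀ (l : List X) (H' : Set (X → Bool)), (∀ n, Shatters H' n → n ≤ D) → h ∈ H' →
      (mistSet h H' l).card + dimN (trueRun h H' l) ≤ dimN H'
  | [], H', _, _ => by simp [mistSet, trueRun]
  | a :: l, H', hb, hh => by
    have hb' : ∀ n, Shatters (restr H' a (h a)) n → n ≤ D :=
      fun n hn => hb n (shatters_mono (restr_subset H' a (h a)) hn)
    have hh' : h ∈ restr H' a (h a) := ⟨hh, rfl⟩
    have IH := card_mistSet h l (restr H' a (h a)) hb' hh'
    have htr : trueRun h H' (a :: l) = trueRun h (restr H' a (h a)) l := rfl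
    rw [htr]
    have hdle : dimN (restr H' a (h a)) ≤ dimN H' := by
      refine dimN_le (fun n hn => ?_)
      exact le_dimN hb (shatters_mono (restr_subset H' a (h a)) hn)
    by_cases hm : soaPred H' a ≠ h a
    · have hdrop := dimN_drop hb hh hm
      have hcard : (mistSet h H' (a :: l)).card ≤
          1 + (mistSet h (restr H' a (h a)) l).card := by
        simp only [mistSet, if_pos hm]
        refine le_trans (Finset.card_union_le _ _) ?_
        have h1 : ({0} : Finset ℕ).card = 1 := rfl
        have h2 := Finset.card_image_le (s := mistSet h (restr H' a (h a)) l) (f := (· + 1))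
        omega
      omega
    · have hcard : (mistSet h H' (a :: l)).card ≤
          (mistSet h (restr H' a (h a)) l).card := by
        simp only [mistSet, if_neg hm]
        refine le_trans (Finset.card_union_le _ _) ?_
        have h2 := Finset.card_image_le (s := mistSet h (restr H' a (h a)) l) (f := (· + 1))
        simpa using h2
      omega

lemma mem_mistSet (h : X → Bool) :
    ∀ (l : List X) (H' : Set (X → Bool)) (j : ℕ) (hj : j < l.length),
      (j ∈ mistSet h H' l ↔
        soaPred (trueRun h H' (l.take j)) (l.get ⟨j, hj⟩) ≠ h (l.get ⟨j, hj⟩))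
  | [], _, j, hj => by simp at hj
  | a :: l, H', 0, hj => by
    simp only [mistSet, Finset.mem_union, Finset.mem_image]
    constructor
    · rintro (hj' | ⟨k, _, hk⟩)
      · split at hj' <;> simp_all [trueRun]
      · omega
    · intro hne
      left
      have ha : (a :: l).get ⟨0, hj⟩ = a := rfl
      rw [ha] at hne
      have hne' : soaPred H' a ≠ h a := by
        simpa [trueRun] using hne
      rw [if_pos hne']
      simp
  | a :: l, H', j + 1, hj => by
    have hj' : j < l.length := by simpa using hj
    have IH := mem_mistSet h l (restr H' a (h a)) j hj'
    simp only [mistSet, Finset.mem_union, Finset.mem_image]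
    constructor
    · rintro (hj'' | ⟨k, hk, hkeq⟩)
      · split at hj'' <;> simp_all
      · have : k = j := by omega
        subst this
        rw [IH] at hk
        simpa [trueRun] using hk
    · intro hne
      right
      refine ⟨j, ?_, rfl⟩
      rw [IH]
      simpa [trueRun] using hne

lemma runOut_take (h : X → Bool) :
    ∀ (l : List X) (H' : Set (X → Bool)) (S : ℕ → Bool), h ∈ H' →
      (∀ (j : ℕ) (hj : j < l.length),
        (S j = true ↔ soaPred (trueRun h H' (l.take j)) (l.get ⟨j, hj⟩) ≠ h (l.get ⟨j, hj⟩))) →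
      ∀ (j : ℕ) (hj : j < l.length), runOut H' S (l.take (j + 1)) = h (l.get ⟨j, hj⟩)
  | [], _, _, _, _, j, hj => by simp at hj
  | a :: l, H', S, hh, hS, 0, hj => by
    have h0 := hS 0 (by simp)
    simp only [List.take_zero, trueRun, List.get] at h0
    show runOut H' S (a :: l.take 0) = h a
    rw [List.take_zero]
    show xor (soaPred H' a) (S 0) = h a
    cases hs : S 0 <;> cases hp : soaPred H' a <;> cases hv : h a <;> simp_all
  | a :: l, H', S, hh, hS, j + 1, hj => by
    have hj' : j < l.length := by simpa using hj
    match l, hj' with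
    | b :: l', hj' =>
      have h0 := hS 0 (by simp)
      simp only [List.take_zero, trueRun, List.get] at h0
      have hout : xor (soaPred H' a) (S 0) = h a := by
        cases hs : S 0 <;> cases hp : soaPred H' a <;> cases hv : h a <;> simp_all
      have hh' : h ∈ restr H' a (h a) := ⟨hh, rfl⟩
      have hS' : ∀ (k : ℕ) (hk : k < (b :: l').length),
          (S (k + 1) = true ↔
            soaPred (trueRun h (restr H' a (h a)) ((b :: l').take k)) ((b :: l').get ⟨k, hk⟩)
              ≠ h ((b :: l').get ⟨k, hk⟩)) := by
        intro k hk
        have := hS (k + 1) (by simpa using hk)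
        simpa [trueRun] using this
      have IH := runOut_take h (b :: l') (restr H' a (h a)) (fun n => S (n + 1)) hh' hS' j hj'
      show runOut H' S (a :: (b :: l').take (j + 1)) = _
      have htk : (b :: l').take (j + 1) = b :: l'.take j := rfl
      rw [htk]
      show runOut (restr H' a (xor (soaPred H' a) (S 0))) (fun n => S (n + 1)) (b :: l'.take j)
          = h ((a :: b :: l').get ⟨j + 1 + 1 - 1, hj⟩)
      rw [hout]
      exact IH

end Aux

lemma prefList_eq {T : ℕ} (x : Fin T → X) (i : Fin T) :
    prefList x i = (List.ofFn x).take (i.1 + 1) := by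
  apply List.ext_getElem
  · simp [prefList]
  · intro n h1 h2
    simp only [prefList, List.getElem_ofFn, List.getElem_take]

theorem stmt_6' {H : Set (X → Bool)} {d : ℕ}
    (hd : Ldim H = ((d : ℕ∞) : WithBot ℕ∞)) (T : ℕ) :
    ∃ A : Finset (List X → Bool),
      A.card ≤ ∑ i ∈ Finset.range (d + 1), T.choose i ∧
      ∀ (x : Fin T → X) (tl : Fin T → Bool), ∀ h ∈ H, ∃ E ∈ A,
        ∀ i : Fin T, (E (prefList x i) ≠ tl i ↔ h (x i) ≠ tl i) := by
  have hb0 : ∀ n, Shatters H n → n ≤ d := by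
    intro n hn
    have hmem : ((n : ℕ∞) : WithBot ℕ∞) ∈
        {d : WithBot ℕ∞ | ∃ n : ℕ, Shatters H n ∧ d = ((n : ℕ∞) : WithBot ℕ∞)} := ⟨n, hn, rfl⟩
    have hle := le_sSup hmem
    rw [show sSup {d : WithBot ℕ∞ | ∃ n : ℕ, Shatters H n ∧ d = ((n : ℕ∞) : WithBot ℕ∞)}
      = Ldim H from rfl, hd] at hle
    exact_mod_cast hle
  refine ⟨((Finset.range (d + 1)).biUnion fun k => (Finset.range T).powersetCard k).image
    (fun s => runOut H fun n => decide (n ∈ s)), ?_, ?_⟩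
  · refine le_trans Finset.card_image_le ?_
    refine le_trans Finset.card_biUnion_le ?_
    refine Finset.sum_le_sum fun k _ => ?_
    rw [Finset.card_powersetCard, Finset.card_range]
  · intro x tl h hh
    set l := List.ofFn x with hl
    set s := mistSet h H l with hs
    refine ⟨runOut H (fun n => decide (n ∈ s)), ?_, ?_⟩
    · refine Finset.mem_image_of_mem _ ?_
      refine Finset.mem_biUnion.2 ⟨s.card, ?_, ?_⟩
      · refine Finset.mem_range.2 (Nat.lt_succ_of_le ?_)
        have hc := card_mistSet h l H hb0 hh
        rw [← hs] at hc
        have hdl := dimN_le hb0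
        omega
      · refine Finset.mem_powersetCard.2 ⟨?_, rfl⟩
        have hsub := mistSet_subset h l H
        simpa [hs, hl] using hsub
    · intro i
      have hlen : i.1 < l.length := by simp [hl]
      have hget : l.get ⟨i.1, hlen⟩ = x i := by simp [hl]
      have hS : ∀ (j : ℕ) (hj : j < l.length),
          ((fun n => decide (n ∈ s)) j = true ↔
            soaPred (trueRun h H (l.take j)) (l.get ⟨j, hj⟩) ≠ h (l.get ⟨j, hj⟩)) := by
        intro j hj
        rw [decide_eq_true_iff]
        exact mem_mistSet h l H j hj
      have hE := runOut_take h l H _ hh hS i.1 hlen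
      rw [hget] at hE
      rw [prefList_eq x i, ← hl, hE]

/-- if `Ldim(H) = d < ∞` then for every `T` there are at most
`Σ_{i≤d} C(T,i)` adaptive experts such that for every labeled sequence and every `h ∈ H`
some expert makes exactly the same set of mistakes as `h`. -/
theorem stmt_6 {X : Type*} (H : Set (X → Bool)) (d : ℕ)
    (hd : Ldim H = ((d : ℕ∞) : WithBot ℕ∞)) (T : ℕ) :
    ∃ A : Finset (List X → Bool),
      A.card ≤ ∑ i ∈ Finset.range (d + 1), T.choose i ∧
      ∀ (x : Fin T → X) (tl : Fin T → Bool), ∀ h ∈ H, ∃ E ∈ A,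
        ∀ i : Fin T, (E (prefList x i) ≠ tl i ↔ h (x i) ≠ tl i) := by
  exact stmt_6' hd T
end

section
/- Let (X, H) be a hypothesis class with finite Littlestone dimension, let 0 < ε < 1/2, and let d_ε denote the maximum possible depth of a complete ε-good tree shattered by H (which is finite). Then for every finite nonempty H' ⊆ H there exists A ⊆ H' with |A| ≥ ε^{d_ε}·|H'| such that A is ε-excellent. -/
open scoped Classical

/-- A finite set `A` of hypotheses is ε-good: every point `x` splits it ε-unevenly. -/
def EpsGoodH {X : Type*} (ε : ℝ) (A : Finset (X → Bool)) : Prop :=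
  ∀ x : X, ((A.filter fun h => h x = true).card : ℝ) < ε * A.card ∨
           ((A.filter fun h => h x = false).card : ℝ) < ε * A.card

/-- A finite set `B ⊆ X` is ε-good w.r.t. the class `H`. -/
def EpsGoodX {X : Type*} (H : Set (X → Bool)) (ε : ℝ) (B : Finset X) : Prop :=
  ∀ h ∈ H, ((B.filter fun b => h b = true).card : ℝ) < ε * B.card ∨
           ((B.filter fun b => h b = false).card : ℝ) < ε * B.card

/-- The majority opinion `t(h,B)`: `true` iff `h` is `0` on `< ε|B|` of `B`. -/
noncomputable def tb {X : Type*} (ε : ℝ) (h : X → Bool) (B : Finset X) : Bool :=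
  if ((B.filter fun b => h b = false).card : ℝ) < ε * B.card then true else false

/-- A finite set `A` of hypotheses is ε-excellent w.r.t. `H`: every ε-good
`B ⊆ X` splits `A` ε-unevenly according to the majority opinions `t(·,B)`. -/
def EpsExcellent {X : Type*} (H : Set (X → Bool)) (ε : ℝ) (A : Finset (X → Bool)) : Prop :=
  ∀ B : Finset X, B.Nonempty → EpsGoodX H ε B →
    ((A.filter fun h => tb ε h B = true).card : ℝ) < ε * A.card ∨
    ((A.filter fun h => tb ε h B = false).card : ℝ) < ε * A.card

/-- The mass that distribution `D` assigns to `{x : h x = 1}`. -/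
noncomputable def hmass {X : Type*} (D : X → ℝ) (h : X → Bool) : ℝ :=
  ∑' x, if h x = true then D x else 0

/-- `D` is a probability mass function on `X`. -/
def IsPMF {X : Type*} (D : X → ℝ) : Prop :=
  (∀ x, 0 ≤ D x) ∧ (∑' x, D x) = 1

/-- `D` is an ε-good probability mass function w.r.t. `H`. -/
def GoodPMF {X : Type*} (H : Set (X → Bool)) (ε : ℝ) (D : X → ℝ) : Prop :=
  IsPMF D ∧ ∀ h ∈ H, hmass D h ≤ ε ∨ 1 - ε ≤ hmass D h

/-- `h` realizes the branch `y` of the distribution-labeled tree `𝒯`: at each node it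
goes in direction 1 iff the node's distribution gives `{x : h x = 1}` mass `≥ 1 - ε`. -/
def RealizesDist {X : Type*} (ε : ℝ) (𝒯 : List Bool → X → ℝ) (h : X → Bool)
    (y : List Bool) : Prop :=
  ∀ i : Fin y.length,
    (y.get i = true → 1 - ε ≤ hmass (𝒯 (y.take i)) h) ∧
    (y.get i = false → hmass (𝒯 (y.take i)) h ≤ ε)

/-- `𝒯` is a complete ε-good binary tree of depth `T` shattered by `H`. -/
def GoodTree {X : Type*} (H : Set (X → Bool)) (ε : ℝ) (T : ℕ)
    (𝒯 : List Bool → X → ℝ) : Prop :=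
  (∀ s : List Bool, s.length < T → GoodPMF H ε (𝒯 s)) ∧
  (∀ y : List Bool, y.length = T → ∃ h ∈ H, RealizesDist ε 𝒯 h y)

/-! ### Auxiliary machinery for the proof -/

/-- The uniform pmf on a finite set `B`. -/
noncomputable def unifB {X : Type*} (B : Finset X) : X → ℝ :=
  fun x => if x ∈ B then (B.card : ℝ)⁻¹ else 0

lemma hmass_unif {X : Type*} (B : Finset X) (h : X → Bool) :
    hmass (unifB B) h = ((B.filter fun b => h b = true).card : ℝ) / B.card := by
  unfold hmass unifB
  rw [tsum_eq_sum (s := B) (by intro x hx; simp [hx])]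
  rw [Finset.sum_congr rfl (fun x hx => by simp [hx] : ∀ x ∈ B,
    (if h x = true then (if x ∈ B then (B.card:ℝ)⁻¹ else 0) else 0)
      = (if h x = true then (B.card:ℝ)⁻¹ else 0))]
  rw [← Finset.sum_filter, Finset.sum_const, nsmul_eq_mul]
  ring

lemma isPMF_unif {X : Type*} (B : Finset X) (hB : B.Nonempty) : IsPMF (unifB B) := by
  have hc : (0:ℝ) < B.card := by exact_mod_cast Finset.card_pos.2 hB
  constructor
  · intro x; unfold unifB; split <;> positivity
  · unfold unifB
    rw [tsum_eq_sum (s := B) (by intro x hx; simp [hx])]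
    rw [Finset.sum_congr rfl (fun x hx => (if_pos hx :
      (if x ∈ B then (B.card:ℝ)⁻¹ else 0) = (B.card:ℝ)⁻¹))]
    rw [Finset.sum_const, nsmul_eq_mul]
    field_simp

lemma card_split {X : Type*} (B : Finset X) (h : X → Bool) :
    ((B.filter fun b => h b = true).card : ℝ)
      + ((B.filter fun b => h b = false).card : ℝ) = B.card := by
  have := Finset.card_filter_add_card_filter_not
    (s := B) (p := fun b => h b = true)
  simp only [Bool.not_eq_true] at this
  exact_mod_cast this

lemma hm_le {X : Type*} {ε : ℝ} {B : Finset X} {h : X → Bool} (hB : B.Nonempty)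
    (hlt : ((B.filter fun b => h b = true).card : ℝ) < ε * B.card) :
    hmass (unifB B) h ≤ ε := by
  have hc : (0:ℝ) < B.card := by exact_mod_cast Finset.card_pos.2 hB
  rw [hmass_unif]
  rw [div_le_iff₀ hc]
  linarith

lemma hm_ge {X : Type*} {ε : ℝ} {B : Finset X} {h : X → Bool} (hB : B.Nonempty)
    (hlt : ((B.filter fun b => h b = false).card : ℝ) < ε * B.card) :
    1 - ε ≤ hmass (unifB B) h := by
  have hc : (0:ℝ) < B.card := by exact_mod_cast Finset.card_pos.2 hB
  have hs := card_split B h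
  rw [hmass_unif, le_div_iff₀ hc]
  linarith

lemma goodPMF_unif {X : Type*} {H : Set (X → Bool)} {ε : ℝ} {B : Finset X}
    (hB : B.Nonempty) (hgood : EpsGoodX H ε B) : GoodPMF H ε (unifB B) := by
  refine ⟨isPMF_unif B hB, fun h hh => ?_⟩
  rcases hgood h hh with hlt | hlt
  · exact Or.inl (hm_le hB hlt)
  · exact Or.inr (hm_ge hB hlt)

/-- Realizing a head step from the `tb` value. -/
lemma tb_head {X : Type*} {H : Set (X → Bool)} {ε : ℝ} {B : Finset X} {h : X → Bool}
    {b : Bool} (hB : B.Nonempty) (hgood : EpsGoodX H ε B) (hh : h ∈ H)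
    (htb : tb ε h B = b) :
    (b = true → 1 - ε ≤ hmass (unifB B) h) ∧ (b = false → hmass (unifB B) h ≤ ε) := by
  constructor
  · intro hb; subst hb
    unfold tb at htb
    by_cases hc : ((B.filter fun b => h b = false).card : ℝ) < ε * B.card
    · exact hm_ge hB hc
    · rw [if_neg hc] at htb; exact absurd htb (by simp)
  · intro hb; subst hb
    unfold tb at htb
    by_cases hc : ((B.filter fun b => h b = false).card : ℝ) < ε * B.card
    · rw [if_pos hc] at htb; exact absurd htb (by simp)
    · rcases hgood h hh with hlt | hlt
      · exact hm_le hB hlt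
      · exact absurd hlt hc

lemma realizesDist_cons {X : Type*} {ε : ℝ} {𝒯 : List Bool → X → ℝ} {h : X → Bool}
    {b : Bool} {y : List Bool}
    (h0 : (b = true → 1 - ε ≤ hmass (𝒯 []) h) ∧ (b = false → hmass (𝒯 []) h ≤ ε))
    (hrest : RealizesDist ε (fun s => 𝒯 (b :: s)) h y) :
    RealizesDist ε 𝒯 h (b :: y) := by
  intro i
  match i with
  | ⟨0, _⟩ => simpa using h0
  | ⟨j+1, hj⟩ =>
    have hjy : j < y.length := by simpa using hj
    have := hrest ⟨j, hjy⟩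
    simpa using this

/-- A good tree of depth `n` all of whose branches are realized inside `A`. -/
def SubTree {X : Type*} (H : Set (X → Bool)) (ε : ℝ) (n : ℕ)
    (A : Finset (X → Bool)) : Prop :=
  ∃ 𝒯 : List Bool → X → ℝ, (∀ s : List Bool, s.length < n → GoodPMF H ε (𝒯 s)) ∧
    ∀ y : List Bool, y.length = n → ∃ h ∈ A, RealizesDist ε 𝒯 h y

lemma split_of_not_excellent {X : Type*} {H : Set (X → Bool)} {ε : ℝ}
    {A : Finset (X → Bool)} (hnot : ¬ EpsExcellent H ε A) :
    ∃ B : Finset X, B.Nonempty ∧ EpsGoodX H ε B ∧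
      ε * A.card ≤ ((A.filter fun h => tb ε h B = true).card : ℝ) ∧
      ε * A.card ≤ ((A.filter fun h => tb ε h B = false).card : ℝ) := by
  unfold EpsExcellent at hnot
  push_neg at hnot
  obtain ⟨B, h1, h2, h3, h4⟩ := hnot
  exact ⟨B, h1, h2, h3, h4⟩

lemma nonempty_of_card_bound {α : Type*} {A : Finset α} {ε c : ℝ} (hε : 0 < ε)
    (hc : 0 < c) (hle : ε * c ≤ (A.card : ℝ)) : A.Nonempty := by
  have : (0:ℝ) < A.card := lt_of_lt_of_le (by positivity) hle
  exact Finset.card_pos.1 (by exact_mod_cast this)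

lemma main_ind {X : Type*} (H : Set (X → Bool)) (ε : ℝ) (hε0 : 0 < ε) (hε1 : ε < 1) :
    ∀ n : ℕ, ∀ A : Finset (X → Bool), ↑A ⊆ H → A.Nonempty →
      (∃ A' ⊆ A, ε ^ n * A.card ≤ (A'.card : ℝ) ∧ EpsExcellent H ε A')
        ∨ SubTree H ε (n+1) A := by
  intro n
  induction n with
  | zero =>
    intro A hAH hAne
    by_cases hex : EpsExcellent H ε A
    · exact Or.inl ⟨A, subset_rfl, by simp, hex⟩
    · right
      obtain ⟨B, hBne, hBgood, h1, h0⟩ := split_of_not_excellent hex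
      have hAc : (0:ℝ) < A.card := by exact_mod_cast Finset.card_pos.2 hAne
      refine ⟨fun _ => unifB B, fun s _ => goodPMF_unif hBne hBgood, ?_⟩
      intro y hy
      match y, hy with
      | [b], _ =>
        cases b with
        | true =>
          obtain ⟨h, hhA⟩ := nonempty_of_card_bound hε0 hAc h1
          have hmem := Finset.mem_filter.1 hhA
          refine ⟨h, hmem.1, ?_⟩
          refine realizesDist_cons (tb_head hBne hBgood (hAH hmem.1) hmem.2) ?_
          intro i; exact absurd i.2 (by simp)
        | false =>
          obtain ⟨h, hhA⟩ := nonempty_of_card_bound hε0 hAc h0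
          have hmem := Finset.mem_filter.1 hhA
          refine ⟨h, hmem.1, ?_⟩
          refine realizesDist_cons (tb_head hBne hBgood (hAH hmem.1) hmem.2) ?_
          intro i; exact absurd i.2 (by simp)
  | succ n ih =>
    intro A hAH hAne
    by_cases hex : EpsExcellent H ε A
    · refine Or.inl ⟨A, subset_rfl, ?_, hex⟩
      have hAc : (0:ℝ) ≤ A.card := by positivity
      have hp : ε ^ (n+1) ≤ 1 := pow_le_one₀ hε0.le hε1.le
      nlinarith
    · obtain ⟨B, hBne, hBgood, h1, h0⟩ := split_of_not_excellent hex
      have hAc : (0:ℝ) < A.card := by exact_mod_cast Finset.card_pos.2 hAne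
      set A1 := A.filter fun h => tb ε h B = true with hA1
      set A0 := A.filter fun h => tb ε h B = false with hA0
      have hA1s : A1 ⊆ A := Finset.filter_subset _ _
      have hA0s : A0 ⊆ A := Finset.filter_subset _ _
      have hA1H : ↑A1 ⊆ H := fun h hh => hAH (hA1s hh)
      have hA0H : ↑A0 ⊆ H := fun h hh => hAH (hA0s hh)
      have hA1ne : A1.Nonempty := nonempty_of_card_bound hε0 hAc h1
      have hA0ne : A0.Nonempty := nonempty_of_card_bound hε0 hAc h0
      have hpow : (0:ℝ) ≤ ε ^ n := by positivity
      rcases ih A1 hA1H hA1ne with ⟨A', hs, hc, hexc⟩ | ⟨𝒯1, g1, r1⟩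
      · refine Or.inl ⟨A', hs.trans hA1s, ?_, hexc⟩
        have : ε ^ n * (ε * A.card) ≤ ε ^ n * A1.card :=
          mul_le_mul_of_nonneg_left h1 hpow
        calc ε ^ (n+1) * A.card = ε ^ n * (ε * A.card) := by ring
          _ ≤ ε ^ n * A1.card := this
          _ ≤ A'.card := hc
      rcases ih A0 hA0H hA0ne with ⟨A', hs, hc, hexc⟩ | ⟨𝒯0, g0, r0⟩
      · refine Or.inl ⟨A', hs.trans hA0s, ?_, hexc⟩
        have : ε ^ n * (ε * A.card) ≤ ε ^ n * A0.card :=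
          mul_le_mul_of_nonneg_left h0 hpow
        calc ε ^ (n+1) * A.card = ε ^ n * (ε * A.card) := by ring
          _ ≤ ε ^ n * A0.card := this
          _ ≤ A'.card := hc
      right
      refine ⟨fun s => match s with
        | [] => unifB B
        | true :: s' => 𝒯1 s'
        | false :: s' => 𝒯0 s', ?_, ?_⟩
      · intro s hs
        match s with
        | [] => exact goodPMF_unif hBne hBgood
        | true :: s' => exact g1 s' (by simpa using hs)
        | false :: s' => exact g0 s' (by simpa using hs)
      · intro y hy
        match y, hy with
        | b :: y', hy =>
          have hy' : y'.length = n + 1 := by simpa using hy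
          cases b with
          | true =>
            obtain ⟨h, hhA, hr⟩ := r1 y' hy'
            have hmem := Finset.mem_filter.1 hhA
            exact ⟨h, hmem.1,
              realizesDist_cons (tb_head hBne hBgood (hAH hmem.1) hmem.2) hr⟩
          | false =>
            obtain ⟨h, hhA, hr⟩ := r0 y' hy'
            have hmem := Finset.mem_filter.1 hhA
            exact ⟨h, hmem.1,
              realizesDist_cons (tb_head hBne hBgood (hAH hmem.1) hmem.2) hr⟩

/-- if `H` has finite Littlestone dimension, `0 < ε < 1/2`, and `d_ε` is the
maximum possible depth of a complete ε-good tree shattered by `H`, then every finite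
nonempty `H' ⊆ H` has an ε-excellent subset `A` with `|A| ≥ ε^{d_ε}·|H'|`. -/
theorem stmt_9 {X : Type*} (H : Set (X → Bool)) (hfin : Ldim H ≠ ⊤)
    (ε : ℝ) (hε0 : 0 < ε) (hε : ε < 1/2) (dε : ℕ)
    (hdε : IsGreatest {T : ℕ | ∃ 𝒯 : List Bool → X → ℝ, GoodTree H ε T 𝒯} dε) :
    ∀ H' : Finset (X → Bool), ↑H' ⊆ H → H'.Nonempty →
      ∃ A ⊆ H', ε ^ dε * H'.card ≤ (A.card : ℝ) ∧ EpsExcellent H ε A := by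
  intro H' hH'H hH'ne
  rcases main_ind H ε hε0 (by linarith) dε H' hH'H hH'ne with ⟨A, h1, h2, h3⟩ | ⟨𝒯, hg, hr⟩
  · exact ⟨A, h1, h2, h3⟩
  · exfalso
    have hmem : (dε + 1) ∈ {T : ℕ | ∃ 𝒯 : List Bool → X → ℝ, GoodTree H ε T 𝒯} := by
      refine ⟨𝒯, hg, fun y hy => ?_⟩
      obtain ⟨h, hhA, hr'⟩ := hr y hy
      exact ⟨h, hH'H hhA, hr'⟩
    have := hdε.2 hmem
    omega
end

section
/- Let (X, H) be a hypothesis class with Ldim(H) = d < ∞ and 0 < ε < 1/2. Let P be an ε-good property for H with constant c = c(P). Then for every finite nonempty H' ⊆ H there is A ⊆ H' of size ≥ ε^{(c+1)d}·|H'| such that A has property P (so in particular A is ε-good), A is Littlestone-opinionated, and for every a ∈ X and t ∈ {0,1}, Ldim({h ∈ A : h(a) = t}) = Ldim(A) if and only if |{h ∈ A : h(a) = t}| ≥ (1−ε)|A|; that is, the ε-good majority and the Littlestone majority agree on A. -/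
open scoped Classical

/-- `A` is Littlestone-opinionated: for every `a ∈ X` exactly one of the two half-space
pieces of `A` has strictly smaller Littlestone dimension than `A`. -/
def LOpinionated {X : Type*} (A : Finset (X → Bool)) : Prop :=
  ∀ a : X,
    Xor' (Ldim {h | h ∈ A ∧ h a = false} < Ldim (↑A : Set (X → Bool)))
         (Ldim {h | h ∈ A ∧ h a = true} < Ldim (↑A : Set (X → Bool)))

/-- `P` is an ε-good property for `H` with constant `c > 0`: every finite set with
property `P` is ε-good, and every finite nonempty subset of `H` contains a subset of
proportion at least `ε^c` with property `P`. -/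
def GoodProperty {X : Type*} (H : Set (X → Bool)) (ε c : ℝ)
    (P : Finset (X → Bool) → Prop) : Prop :=
  0 < c ∧
  (∀ A : Finset (X → Bool), ↑A ⊆ H → P A → EpsGoodH ε A) ∧
  (∀ H' : Finset (X → Bool), ↑H' ⊆ H → H'.Nonempty →
    ∃ B ⊆ H', ε ^ c * H'.card ≤ (B.card : ℝ) ∧ P B)

section Aux
variable {X : Type*}

lemma shatters_mono_s13 {A B : Set (X → Bool)} (hAB : A ⊆ B) {n : ℕ}
    (h : Shatters A n) : Shatters B n := by
  obtain ⟨t, ht⟩ := h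
  refine ⟨t, fun y hy => ?_⟩
  obtain ⟨g, hgA, hgr⟩ := ht y hy
  exact ⟨g, hAB hgA, hgr⟩

lemma shatters_of_le {A : Set (X → Bool)} {m n : ℕ} (hmn : m ≤ n)
    (h : Shatters A n) : Shatters A m := by
  obtain ⟨t, ht⟩ := h
  refine ⟨t, fun y hy => ?_⟩
  obtain ⟨g, hgA, hgr⟩ := ht (y ++ List.replicate (n - m) true)
    (by simp [hy, Nat.add_sub_cancel' hmn])
  refine ⟨g, hgA, fun i => ?_⟩
  have hi : (i : ℕ) < (y ++ List.replicate (n - m) true).length := by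
    simp only [List.length_append, List.length_replicate]
    exact lt_of_lt_of_le i.2 (Nat.le_add_right _ _)
  have h2 := hgr ⟨i, hi⟩
  simp only [List.get_eq_getElem] at h2 ⊢
  rwa [List.take_append_of_le_length (le_of_lt i.2), List.getElem_append_left i.2] at h2

lemma shatters_zero_s13 {A : Set (X → Bool)} (hA : A.Nonempty) (x0 : X) :
    Shatters A 0 := by
  obtain ⟨g, hg⟩ := hA
  refine ⟨fun _ => x0, fun y hy => ⟨g, hg, fun i => ?_⟩⟩
  exact absurd i.2 (by omega)

lemma le_ldim_of_shatters {A : Set (X → Bool)} {n : ℕ} (h : Shatters A n) :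
    ((n : ℕ∞) : WithBot ℕ∞) ≤ Ldim A :=
  le_sSup ⟨n, h, rfl⟩

lemma ldim_lt_of_not_shatters {A : Set (X → Bool)} {n : ℕ} (h : ¬ Shatters A n) :
    Ldim A < ((n : ℕ∞) : WithBot ℕ∞) := by
  cases n with
  | zero =>
    have : {d : WithBot ℕ∞ | ∃ n : ℕ, Shatters A n ∧ d = ((n : ℕ∞) : WithBot ℕ∞)} = ∅ := by
      ext x
      simp only [Set.mem_setOf_eq, Set.mem_empty_iff_false, iff_false]
      rintro ⟨k, hk, rfl⟩
      exact h (shatters_of_le (Nat.zero_le k) hk)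
    rw [Ldim, this, sSup_empty]
    exact WithBot.bot_lt_coe _
  | succ k =>
    have h1 : Ldim A ≤ ((k : ℕ∞) : WithBot ℕ∞) := by
      apply sSup_le
      rintro x ⟨j, hj, rfl⟩
      have : j ≤ k := by
        by_contra hc
        exact h (shatters_of_le (by omega) hj)
      exact_mod_cast this
    refine lt_of_le_of_lt h1 ?_
    exact_mod_cast Nat.lt_succ_self k

lemma shatters_of_ldim_eq {A : Set (X → Bool)} {n : ℕ}
    (h : Ldim A = ((n : ℕ∞) : WithBot ℕ∞)) : Shatters A n := by
  by_contra hc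
  exact absurd h (ne_of_lt (ldim_lt_of_not_shatters hc))

lemma ldim_mono {A B : Set (X → Bool)} (h : A ⊆ B) : Ldim A ≤ Ldim B := by
  apply sSup_le_sSup
  rintro x ⟨n, hn, rfl⟩
  exact ⟨n, shatters_mono_s13 h hn, rfl⟩

lemma shatters_join {A : Set (X → Bool)} (a : X) {n : ℕ}
    (h0 : Shatters {h | h ∈ A ∧ h a = false} n)
    (h1 : Shatters {h | h ∈ A ∧ h a = true} n) : Shatters A (n + 1) := by
  obtain ⟨t0, ht0⟩ := h0
  obtain ⟨t1, ht1⟩ := h1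
  refine ⟨fun s => match s with
    | [] => a
    | b :: s' => if b then t1 s' else t0 s', fun y hy => ?_⟩
  match y, hy with
  | b :: y', hy =>
    have hy' : y'.length = n := by simpa using hy
    obtain ⟨g, hgA, hgr⟩ : ∃ g, (g ∈ A ∧ g a = b) ∧
        Realizes (if b then t1 else t0) g y' := by
      cases b with
      | false => obtain ⟨g, hg, hr⟩ := ht0 y' hy'; exact ⟨g, hg, by simpa using hr⟩
      | true => obtain ⟨g, hg, hr⟩ := ht1 y' hy'; exact ⟨g, hg, by simpa using hr⟩
    refine ⟨g, hgA.1, fun i => ?_⟩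
    induction i using Fin.cases with
    | zero => simpa using hgA.2
    | succ j =>
      have := hgr j
      simp only [List.get_eq_getElem] at this ⊢
      simp only [Fin.val_succ, List.take_succ_cons, List.getElem_cons_succ]
      cases b <;> simpa using this

lemma wb_le_of_lt_succ {x : WithBot ℕ∞} {k : ℕ}
    (h : x < (((k + 1 : ℕ) : ℕ∞) : WithBot ℕ∞)) : x ≤ ((k : ℕ∞) : WithBot ℕ∞) := by
  cases x with
  | bot => exact bot_le
  | coe e =>
    rw [WithBot.coe_le_coe]
    rw [WithBot.coe_lt_coe] at h
    have h' : e < (k : ℕ∞) + 1 := by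
      rwa [show (((k + 1 : ℕ) : ℕ∞)) = (k : ℕ∞) + 1 by push_cast; ring] at h
    exact (ENat.lt_add_one_iff (by simp)).mp h'

end Aux


section NoBad
variable {X : Type*}

lemma filter_card_sum (B : Finset (X → Bool)) (a : X) (t : Bool) :
    (B.filter fun h => h a = t).card + (B.filter fun h => h a = !t).card = B.card := by
  have hcg : (B.filter fun h => h a = !t) = (B.filter fun h => ¬ (h a = t)) := by
    apply Finset.filter_congr
    intro h _
    cases t <;> cases hha : h a <;> simp [hha]
  rw [hcg]
  exact Finset.card_filter_add_card_filter_not _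

lemma claimA {ε : ℝ} (hε0 : 0 < ε) (hε : ε < 1/2)
    {B : Finset (X → Bool)} (hne : B.Nonempty)
    {m : ℕ} (hm : Ldim (↑B : Set (X → Bool)) = ((m : ℕ∞) : WithBot ℕ∞))
    (hnb : ∀ (a : X) (t : Bool), (1 - ε) * B.card ≤ ((B.filter fun h => h a = t).card : ℝ) →
      Ldim {h | h ∈ B ∧ h a = t} = Ldim (↑B : Set (X → Bool)))
    (a : X) (t : Bool)
    (hmin : ((B.filter fun h => h a = t).card : ℝ) < ε * B.card) :
    ((1 - ε) * B.card ≤ ((B.filter fun h => h a = !t).card : ℝ)) ∧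
    Ldim {h | h ∈ B ∧ h a = !t} = Ldim (↑B : Set (X → Bool)) ∧
    Ldim {h | h ∈ B ∧ h a = t} < Ldim (↑B : Set (X → Bool)) ∧
    ¬ ((1 - ε) * B.card ≤ ((B.filter fun h => h a = t).card : ℝ)) := by
  have hsum := filter_card_sum B a t
  have hsumR : ((B.filter fun h => h a = t).card : ℝ) +
      ((B.filter fun h => h a = !t).card : ℝ) = B.card := by exact_mod_cast hsum
  have hcard0 : (0 : ℝ) ≤ B.card := Nat.cast_nonneg _
  have hmaj : (1 - ε) * B.card ≤ ((B.filter fun h => h a = !t).card : ℝ) := by nlinarith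
  have heq : Ldim {h | h ∈ B ∧ h a = !t} = Ldim (↑B : Set (X → Bool)) := hnb a (!t) hmaj
  refine ⟨hmaj, heq, ?_, ?_⟩
  · rw [hm]
    apply ldim_lt_of_not_shatters
    intro hsh
    have hsh' : Shatters {h | h ∈ B ∧ h a = !t} m := shatters_of_ldim_eq (heq.trans hm)
    have hjoin : Shatters (↑B : Set (X → Bool)) (m + 1) := by
      cases t with
      | false => exact shatters_join a hsh (by simpa using hsh')
      | true => exact shatters_join a (by simpa using hsh') hsh
    have hle := le_ldim_of_shatters hjoin
    rw [hm] at hle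
    have h2 : ((m : ℕ∞) + 1) ≤ (m : ℕ∞) := by
      rw [WithBot.coe_le_coe] at hle
      exact_mod_cast hle
    exact absurd h2 (not_le.mpr ((ENat.lt_add_one_iff (by simp)).mpr le_rfl))
  · intro hc
    have hεε : ε * (B.card : ℝ) ≤ (1 - ε) * B.card := by nlinarith
    linarith

lemma nobad {ε : ℝ} (hε0 : 0 < ε) (hε : ε < 1/2)
    {B : Finset (X → Bool)} (hne : B.Nonempty)
    (hgood : EpsGoodH ε B)
    {m : ℕ} (hm : Ldim (↑B : Set (X → Bool)) = ((m : ℕ∞) : WithBot ℕ∞))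
    (hnb : ∀ (a : X) (t : Bool), (1 - ε) * B.card ≤ ((B.filter fun h => h a = t).card : ℝ) →
      Ldim {h | h ∈ B ∧ h a = t} = Ldim (↑B : Set (X → Bool))) :
    LOpinionated B ∧ ∀ (a : X) (t : Bool),
      Ldim {h | h ∈ B ∧ h a = t} = Ldim (↑B : Set (X → Bool)) ↔
        (1 - ε) * B.card ≤ ((B.filter fun h => h a = t).card : ℝ) := by
  constructor
  · intro a
    rcases hgood a with h1 | h1
    · obtain ⟨-, heqF, hltT, -⟩ := claimA hε0 hε hne hm hnb a true h1
      simp only [Bool.not_true] at heqF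
      exact Or.inr ⟨hltT, by rw [heqF]; exact lt_irrefl _⟩
    · obtain ⟨-, heqT, hltF, -⟩ := claimA hε0 hε hne hm hnb a false h1
      simp only [Bool.not_false] at heqT
      exact Or.inl ⟨hltF, by rw [heqT]; exact lt_irrefl _⟩
  · intro a t
    rcases hgood a with h1 | h1
    · obtain ⟨hmajF, heqF, hltT, hnotT⟩ := claimA hε0 hε hne hm hnb a true h1
      simp only [Bool.not_true] at hmajF heqF
      cases t with
      | true => exact ⟨fun he => absurd he (ne_of_lt hltT), fun hc => absurd hc hnotT⟩
      | false => exact ⟨fun _ => hmajF, fun _ => heqF⟩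
    · obtain ⟨hmajT, heqT, hltF, hnotF⟩ := claimA hε0 hε hne hm hnb a false h1
      simp only [Bool.not_false] at hmajT heqT
      cases t with
      | false => exact ⟨fun he => absurd he (ne_of_lt hltF), fun hc => absurd hc hnotF⟩
      | true => exact ⟨fun _ => hmajT, fun _ => heqT⟩

end NoBad


section Key
variable {X : Type*}

lemma coe_filter_eq (B : Finset (X → Bool)) (a : X) (t : Bool) :
    (↑(B.filter fun h => h a = t) : Set (X → Bool)) = {h | h ∈ B ∧ h a = t} := by
  ext h; simp

lemma ldim_attained {B : Finset (X → Bool)} (hne : B.Nonempty) (x0 : X)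
    {k : ℕ} (hld : Ldim (↑B : Set (X → Bool)) ≤ ((k : ℕ∞) : WithBot ℕ∞)) :
    ∃ m : ℕ, Ldim (↑B : Set (X → Bool)) = ((m : ℕ∞) : WithBot ℕ∞) := by
  classical
  set m := Nat.findGreatest (fun j => Shatters (↑B : Set (X → Bool)) j) k with hmdef
  have hsh0 : Shatters (↑B : Set (X → Bool)) 0 := by
    obtain ⟨g, hg⟩ := hne
    exact shatters_zero_s13 ⟨g, hg⟩ x0
  have hshm : Shatters (↑B : Set (X → Bool)) m :=
    Nat.findGreatest_spec (Nat.zero_le k) hsh0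
  refine ⟨m, le_antisymm ?_ (le_ldim_of_shatters hshm)⟩
  apply sSup_le
  rintro x ⟨j, hj, rfl⟩
  have hjk : j ≤ k := by
    have := le_trans (le_ldim_of_shatters hj) hld
    rw [WithBot.coe_le_coe] at this
    exact_mod_cast this
  have : j ≤ m := Nat.le_findGreatest hjk hj
  rw [WithBot.coe_le_coe]
  exact_mod_cast this

lemma key (H : Set (X → Bool)) (ε : ℝ) (hε0 : 0 < ε) (hε : ε < 1/2)
    (P : Finset (X → Bool) → Prop) (c : ℝ) (hP : GoodProperty H ε c P) (x0 : X) :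
    ∀ n : ℕ, ∀ H' : Finset (X → Bool), ↑H' ⊆ H → H'.Nonempty →
      Ldim (↑H' : Set (X → Bool)) ≤ ((n : ℕ∞) : WithBot ℕ∞) →
      ∃ A ⊆ H', ε ^ ((c + 1) * (n : ℝ)) * H'.card ≤ (A.card : ℝ) ∧
        P A ∧ EpsGoodH ε A ∧ LOpinionated A ∧
        ∀ (a : X) (t : Bool),
          Ldim {h | h ∈ A ∧ h a = t} = Ldim (↑A : Set (X → Bool)) ↔
            (1 - ε) * A.card ≤ ((A.filter fun h => h a = t).card : ℝ) := by
  obtain ⟨hc0, hPgood, hPext⟩ := hP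
  have hε1 : ε < 1 := by linarith
  intro n
  induction n with
  | zero =>
    intro H' hsub hne hld
    obtain ⟨B, hBsub, hBcard, hBP⟩ := hPext H' hsub hne
    have hBne : B.Nonempty := by
      rw [← Finset.card_pos, ← Nat.cast_pos (α := ℝ)]
      calc (0:ℝ) < ε ^ c * H'.card := by
            apply mul_pos (Real.rpow_pos_of_pos hε0 c)
            exact_mod_cast Finset.card_pos.mpr hne
        _ ≤ B.card := hBcard
    have hBH : (↑B : Set (X → Bool)) ⊆ H := fun h hh => hsub (hBsub hh)
    have hgood : EpsGoodH ε B := hPgood B hBH hBP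
    have hcard1 : H'.card ≤ 1 := by
      by_contra hcon
      obtain ⟨g, hg, g', hg', hgg'⟩ := Finset.one_lt_card.mp (not_le.mp hcon)
      obtain ⟨x, hx⟩ := Function.ne_iff.mp hgg'
      have hpieces : Shatters {h | h ∈ H' ∧ h x = false} 0 ∧
          Shatters {h | h ∈ H' ∧ h x = true} 0 := by
        cases hgx : g x with
        | false =>
          have hg'x : g' x = true := by
            cases hg'x : g' x with
            | true => rfl
            | false => rw [hgx, hg'x] at hx; exact absurd rfl hx
          exact ⟨shatters_zero_s13 ⟨g, hg, hgx⟩ x, shatters_zero_s13 ⟨g', hg', hg'x⟩ x⟩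
        | true =>
          have hg'x : g' x = false := by
            cases hg'x : g' x with
            | false => rfl
            | true => rw [hgx, hg'x] at hx; exact absurd rfl hx
          exact ⟨shatters_zero_s13 ⟨g', hg', hg'x⟩ x, shatters_zero_s13 ⟨g, hg, hgx⟩ x⟩
      have hjoin : Shatters (↑H' : Set (X → Bool)) 1 := shatters_join x hpieces.1 hpieces.2
      have hle := le_trans (le_ldim_of_shatters hjoin) hld
      rw [WithBot.coe_le_coe] at hle
      have : (1:ℕ) ≤ 0 := by exact_mod_cast hle
      omega
    have hBH' : B = H' := Finset.eq_of_subset_of_card_le hBsub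
      (le_trans hcard1 (Finset.card_pos.mpr hBne))
    have hm : Ldim (↑B : Set (X → Bool)) = (((0:ℕ) : ℕ∞) : WithBot ℕ∞) := by
      apply le_antisymm
      · refine le_trans (ldim_mono ?_) hld
        exact_mod_cast Finset.coe_subset.mpr hBsub
      · refine le_ldim_of_shatters (shatters_zero_s13 ?_ x0)
        obtain ⟨g, hg⟩ := hBne; exact ⟨g, hg⟩
    have hnb : ∀ (a : X) (t : Bool),
        (1 - ε) * B.card ≤ ((B.filter fun h => h a = t).card : ℝ) →
        Ldim {h | h ∈ B ∧ h a = t} = Ldim (↑B : Set (X → Bool)) := by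
      intro a t hmaj
      have hpne : ({h | h ∈ B ∧ h a = t} : Set (X → Bool)).Nonempty := by
        have h1 : (0:ℝ) < (1 - ε) * B.card := by
          apply mul_pos (by linarith)
          exact_mod_cast Finset.card_pos.mpr hBne
        have h2 : (0:ℝ) < ((B.filter fun h => h a = t).card : ℝ) := lt_of_lt_of_le h1 hmaj
        have h3 : (B.filter fun h => h a = t).Nonempty := by
          rw [← Finset.card_pos]; exact_mod_cast h2
        obtain ⟨g, hg⟩ := h3
        rw [Finset.mem_filter] at hg
        exact ⟨g, hg⟩
      apply le_antisymm
      · exact ldim_mono fun h hh => hh.1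
      · rw [hm]
        exact le_ldim_of_shatters (shatters_zero_s13 hpne x0)
    obtain ⟨hop, hiff⟩ := nobad hε0 hε hBne hgood hm hnb
    refine ⟨B, hBsub, ?_, hBP, hgood, hop, hiff⟩
    rw [hBH']
    simp
  | succ k ih =>
    intro H' hsub hne hld
    obtain ⟨B, hBsub, hBcard, hBP⟩ := hPext H' hsub hne
    have hBne : B.Nonempty := by
      rw [← Finset.card_pos, ← Nat.cast_pos (α := ℝ)]
      calc (0:ℝ) < ε ^ c * H'.card := by
            apply mul_pos (Real.rpow_pos_of_pos hε0 c)
            exact_mod_cast Finset.card_pos.mpr hne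
        _ ≤ B.card := hBcard
    have hBH : (↑B : Set (X → Bool)) ⊆ H := fun h hh => hsub (hBsub hh)
    have hgood : EpsGoodH ε B := hPgood B hBH hBP
    have hldB : Ldim (↑B : Set (X → Bool)) ≤ (((k+1:ℕ) : ℕ∞) : WithBot ℕ∞) := by
      refine le_trans (ldim_mono ?_) hld
      exact_mod_cast Finset.coe_subset.mpr hBsub
    by_cases hbad : ∃ (a : X) (t : Bool),
        (1 - ε) * B.card ≤ ((B.filter fun h => h a = t).card : ℝ) ∧
        Ldim {h | h ∈ B ∧ h a = t} < Ldim (↑B : Set (X → Bool))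
    · obtain ⟨a, t, hmaj, hlt⟩ := hbad
      set B' := B.filter fun h => h a = t with hB'def
      have hcoe : (↑B' : Set (X → Bool)) = {h | h ∈ B ∧ h a = t} := coe_filter_eq B a t
      have hltB' : Ldim (↑B' : Set (X → Bool)) < (((k+1:ℕ) : ℕ∞) : WithBot ℕ∞) := by
        rw [hcoe]; exact lt_of_lt_of_le hlt hldB
      have hleB' : Ldim (↑B' : Set (X → Bool)) ≤ ((k : ℕ∞) : WithBot ℕ∞) :=
        wb_le_of_lt_succ hltB'
      have hB'ne : B'.Nonempty := by
        rw [← Finset.card_pos, ← Nat.cast_pos (α := ℝ)]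
        calc (0:ℝ) < (1 - ε) * B.card := by
              apply mul_pos (by linarith)
              exact_mod_cast Finset.card_pos.mpr hBne
          _ ≤ B'.card := hmaj
      have hB'H : (↑B' : Set (X → Bool)) ⊆ H := fun h hh =>
        hBH (Finset.filter_subset _ _ hh)
      obtain ⟨A, hAB', hAcard, hAP, hAgood, hAop, hAiff⟩ := ih B' hB'H hB'ne hleB'
      refine ⟨A, hAB'.trans ((Finset.filter_subset _ _).trans hBsub), ?_,
        hAP, hAgood, hAop, hAiff⟩
      have e1 : ε ^ ((c + 1) * ((k+1:ℕ) : ℝ)) = ε ^ ((c + 1) * (k : ℝ)) * ε ^ c * ε := by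
        rw [show (c + 1) * ((k+1:ℕ) : ℝ) = ((c + 1) * (k : ℝ) + c) + 1 by push_cast; ring,
          Real.rpow_add hε0, Real.rpow_add hε0, Real.rpow_one]
      have q0 : (0:ℝ) < ε ^ ((c + 1) * (k : ℝ)) := Real.rpow_pos_of_pos hε0 _
      have hεB : ε * (B.card : ℝ) ≤ (1 - ε) * B.card := by
        have := Nat.cast_nonneg (α := ℝ) B.card
        nlinarith
      calc ε ^ ((c + 1) * ((k+1:ℕ) : ℝ)) * H'.card
          = ε ^ ((c + 1) * (k : ℝ)) * (ε * (ε ^ c * H'.card)) := by rw [e1]; ring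
        _ ≤ ε ^ ((c + 1) * (k : ℝ)) * (ε * B.card) := by
            apply mul_le_mul_of_nonneg_left _ (le_of_lt q0)
            exact mul_le_mul_of_nonneg_left hBcard (le_of_lt hε0)
        _ ≤ ε ^ ((c + 1) * (k : ℝ)) * B'.card :=
            mul_le_mul_of_nonneg_left (le_trans hεB hmaj) (le_of_lt q0)
        _ ≤ A.card := hAcard
    · push_neg at hbad
      have hnb : ∀ (a : X) (t : Bool),
          (1 - ε) * B.card ≤ ((B.filter fun h => h a = t).card : ℝ) →
          Ldim {h | h ∈ B ∧ h a = t} = Ldim (↑B : Set (X → Bool)) := fun a t hmaj =>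
        le_antisymm (ldim_mono fun h hh => hh.1) (hbad a t hmaj)
      obtain ⟨m, hm⟩ := ldim_attained hBne x0 hldB
      obtain ⟨hop, hiff⟩ := nobad hε0 hε hBne hgood hm hnb
      refine ⟨B, hBsub, ?_, hBP, hgood, hop, hiff⟩
      refine le_trans ?_ hBcard
      apply mul_le_mul_of_nonneg_right _ (Nat.cast_nonneg _)
      apply Real.rpow_le_rpow_of_exponent_ge hε0 (le_of_lt hε1)
      have hk1 : (1:ℝ) ≤ ((k+1:ℕ) : ℝ) := by push_cast; linarith
      nlinarith

end Key


/-- if `Ldim(H) = d < ∞`, `0 < ε < 1/2` and `P` is an ε-good property for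
`H` with constant `c`, every finite nonempty `H' ⊆ H` has a subset `A` with
`|A| ≥ ε^{(c+1)d} |H'|` which has property `P` (hence is ε-good), is
Littlestone-opinionated, and the ε-good majority and the Littlestone majority agree on `A`. -/
theorem stmt_13 {X : Type*} (H : Set (X → Bool)) (d : ℕ)
    (hd : Ldim H = ((d : ℕ∞) : WithBot ℕ∞))
    (ε : ℝ) (hε0 : 0 < ε) (hε : ε < 1/2)
    (P : Finset (X → Bool) → Prop) (c : ℝ) (hP : GoodProperty H ε c P) :
    ∀ H' : Finset (X → Bool), ↑H' ⊆ H → H'.Nonempty →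
      ∃ A ⊆ H', ε ^ ((c + 1) * (d : ℝ)) * H'.card ≤ (A.card : ℝ) ∧
        P A ∧ EpsGoodH ε A ∧ LOpinionated A ∧
        ∀ (a : X) (t : Bool),
          Ldim {h | h ∈ A ∧ h a = t} = Ldim (↑A : Set (X → Bool)) ↔
            (1 - ε) * A.card ≤ ((A.filter fun h => h a = t).card : ℝ) := by
  intro H' hsub hne
  by_cases hX : Nonempty X
  · obtain ⟨x0⟩ := hX
    have hld : Ldim (↑H' : Set (X → Bool)) ≤ ((d : ℕ∞) : WithBot ℕ∞) := by
      rw [← hd]; exact ldim_mono hsub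
    exact key H ε hε0 hε P c hP x0 d H' hsub hne hld
  · exfalso
    have hbot : Ldim H = (⊥ : WithBot ℕ∞) := by
      have hempty : {dd : WithBot ℕ∞ | ∃ n : ℕ, Shatters H n ∧ dd = ((n : ℕ∞) : WithBot ℕ∞)}
          = ∅ := by
        ext x
        simp only [Set.mem_setOf_eq, Set.mem_empty_iff_false, iff_false]
        rintro ⟨n, ⟨tt, -⟩, rfl⟩
        exact hX ⟨tt []⟩
      rw [Ldim, hempty, sSup_empty]
    rw [hbot] at hd
    exact WithBot.bot_ne_coe hd
end
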